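/- Let (X,d) be a finite ultrametric space. Then B ∈ B_X if and only if B is nonempty and B = {x ∈ X : d(x,b) ≤ diam B} for every b ∈ B. -/

import Mathlib

/-- An ultrametric space: a metric space satisfying the strong triangle inequality. -/
def IsUltrametric (X : Type*) [MetricSpace X] : Prop :=
  ∀ x y z : X, dist x y ≤ max (dist x z) (dist z y)

/-- The ballean of a metric space: closed balls whose radius is realized as a
distance from the center (i.e. lies in the spectrum `Sp_t(X)`). -/
def Ballean (X : Type*) [MetricSpace X] : Set (Set X) :=
  {B | ∃ t r, (∃ x : X, dist x t = r) ∧ B = Metric.closedBall t r}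

/-- A ball-preserving map: images of balls of `B_X` are in `B_Y`, preimages of
balls of `B_Y` are in `B_X`. -/
def BallPreserving {X Y : Type*} [MetricSpace X] [MetricSpace Y] (F : X → Y) : Prop :=
  (∀ Z ∈ Ballean X, F '' Z ∈ Ballean Y) ∧ (∀ W ∈ Ballean Y, F ⁻¹' W ∈ Ballean X)

/-! Every point of an ultrametric closed ball is a centre of it, and a ball whose radius is
realised as a distance from its centre has diameter exactly that radius. Conversely, a finite
nonempty set attains its diameter at some pair `a, c`, so the hypothesis at `c` exhibits it as
the ball of radius `dist a c` about `c`. -/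

section

variable {X : Type*}

theorem IsUltrametric.isUltrametricDist [MetricSpace X] (hX : IsUltrametric X) :
    IsUltrametricDist X :=
  ⟨fun x y z => hX x z y⟩

open Metric

theorem Set.Finite.exists_dist_eq_diam [PseudoMetricSpace X] {s : Set X} (hs : s.Finite)
    (hne : s.Nonempty) : ∃ a ∈ s, ∃ b ∈ s, dist a b = diam s := by
  obtain ⟨⟨a, b⟩, ⟨ha, hb⟩, hmax⟩ :=
    (s ×ˢ s).exists_max_image (fun p => dist p.1 p.2) (hs.prod hs) (hne.prod hne)
  refine ⟨a, ha, b, hb, le_antisymm (dist_le_diam_of_mem hs.isBounded ha hb) ?_⟩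
  exact diam_le_of_forall_dist_le dist_nonneg fun x hx y hy => hmax (x, y) ⟨hx, hy⟩

namespace IsUltrametricDist

variable [PseudoMetricSpace X] [IsUltrametricDist X]

theorem diam_closedBall_le {x : X} {r : ℝ} (hr : 0 ≤ r) : diam (closedBall x r) ≤ r :=
  diam_le_of_forall_dist_le hr fun _ ha _ hb =>
    (dist_triangle_max _ x _).trans (max_le ha (dist_comm x _ ▸ hb))

theorem diam_closedBall_of_dist_eq {x y : X} {r : ℝ} (h : dist y x = r) :
    diam (closedBall x r) = r := by
  have hr : 0 ≤ r := h ▸ dist_nonneg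
  refine (diam_closedBall_le hr).antisymm ?_
  calc r = dist y x := h.symm
    _ ≤ diam (closedBall x r) :=
      dist_le_diam_of_mem isBounded_closedBall h.le (mem_closedBall_self hr)

end IsUltrametricDist

end

theorem mem_ballean_iff {X : Type*} [MetricSpace X] [Fintype X]
    (hX : IsUltrametric X) (B : Set X) :
    B ∈ Ballean X ↔
      B.Nonempty ∧ ∀ b ∈ B, B = {x : X | dist x b ≤ Metric.diam B} := by
  have : IsUltrametricDist X := hX.isUltrametricDist
  constructor
  · rintro ⟨t, r, ⟨x, hxt⟩, rfl⟩
    have hr : 0 ≤ r := hxt ▸ dist_nonneg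
    refine ⟨⟨t, Metric.mem_closedBall_self hr⟩, fun b hb => ?_⟩
    rw [IsUltrametricDist.diam_closedBall_of_dist_eq hxt,
      IsUltrametricDist.closedBall_eq_of_mem hb]
    rfl
  · rintro ⟨hne, hB⟩
    obtain ⟨a, -, c, hc, hac⟩ := B.toFinite.exists_dist_eq_diam hne
    exact ⟨c, Metric.diam B, ⟨a, hac⟩, hB c hc⟩
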